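/- Fix w > 0 and let s_n = E|F(Λ^{[n]})| be the expected number of founders of the weighted-insertion order with weight w on [1,n]. Then s_1 = 1 and s_{n+1} = s_n + 2w/(2w+n-1), and consequently s_n ≤ c₁ log n for all n ≥ 2, for some constant c₁ depending only on w. -/

import Mathlib

open scoped Classical

/-- The founders of a total order on positions `0,…,l.length-1`, where the
list entry `l[i]` is the arrival rank of position `i` (smaller = earlier in
the order): position `i` is a founder if it is order-below everything to its
left, or order-below everything to its right. -/
noncomputable def founders (l : List ℕ) : Finset ℕ :=
  (Finset.range l.length).filter fun i =>
    (∀ j < i, l.getD i 0 < l.getD j 0) ∨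
    (∀ j < l.length, i < j → l.getD i 0 < l.getD j 0)

/-- All total orders of `[1,n]`, encoded as permutation lists of `{0,…,n-1}`:
entry `l[i]` is the arrival rank of position `i`. -/
noncomputable def perms (n : ℕ) : Finset (List ℕ) :=
  (List.range n).permutations.toFinset

/-- The probability mass function of the weighted-insertion order with weight
`w` on `n` positions: elements `0,1,…,n-1` are inserted one by one in order of
arrival rank, element `k` being inserted (as the current order-maximum) at one
of the `k+1` gaps, the two endpoint gaps having weight `w` and interior gaps
weight `1`.  The mass of a list is computed by peeling off the last arrival. -/
noncomputable def wiP (w : ℝ) : ℕ → List ℕ → ℝ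
  | 0, l => if l = [] then 1 else 0
  | 1, l => if l = [0] then 1 else 0
  | (n + 2), l =>
      ((if l.idxOf (n + 1) = 0 ∨ l.idxOf (n + 1) = l.length - 1 then w else 1) /
          (2 * w + n)) * wiP w (n + 1) (l.erase (n + 1))

/-- `pFound w n k` : the probability that position `k` (1-based, `1 ≤ k ≤ n`)
is a founder of the weighted-insertion order with weight `w` on `[1,n]`. -/
noncomputable def pFound (w : ℝ) (n k : ℕ) : ℝ :=
  ∑ l ∈ perms n, if k - 1 ∈ founders l then wiP w n l else 0

/-- `sFound w n` : the expected number of founders of the weighted-insertion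
order with weight `w` on `[1,n]`. -/
noncomputable def sFound (w : ℝ) (n : ℕ) : ℝ :=
  ∑ l ∈ perms n, ((founders l).card : ℝ) * wiP w n l

/-- The restriction of the total order encoded by `l` to the block of
positions `off, off+1, …, off + s.length - 1` coincides with the total order
encoded by `s`. -/
def restrEq (l : List ℕ) (off : ℕ) (s : List ℕ) : Prop :=
  ∀ i < s.length, ∀ j < s.length,
    (l.getD (off + i) 0 < l.getD (off + j) 0 ↔ s.getD i 0 < s.getD j 0)
section Helpers

open List Finset

lemma myIndexOf_insertIdx (a : ℕ) : ∀ (p : ℕ) (l : List ℕ), a ∉ l → p ≤ l.length →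
    (l.insertIdx p a).idxOf a = p
  | 0, l, _, _ => by simp
  | (p+1), [], _, h => by simp at h
  | (p+1), b :: t, ha, h => by
      have hb : b ≠ a := fun hba => ha (hba ▸ (List.mem_cons_self (a := b) (l := t)))
      simp only [List.insertIdx_succ_cons]
      rw [List.idxOf_cons_ne _ hb,
        myIndexOf_insertIdx a p t (fun h' => ha (List.mem_cons_of_mem b h'))
          (by simpa using h)]

lemma myErase_insertIdx (a : ℕ) : ∀ (p : ℕ) (l : List ℕ), a ∉ l → p ≤ l.length →
    (l.insertIdx p a).erase a = l
  | 0, l, _, _ => by simp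
  | (p+1), [], _, h => by simp at h
  | (p+1), b :: t, ha, h => by
      have hb : b ≠ a := fun hba => ha (hba ▸ (List.mem_cons_self (a := b) (l := t)))
      simp only [List.insertIdx_succ_cons]
      rw [List.erase_cons_tail (by simpa using hb),
        myErase_insertIdx a p t (fun h' => ha (List.mem_cons_of_mem b h'))
          (by simpa using h)]

lemma myInsertIdx_indexOf_erase (a : ℕ) : ∀ (l : List ℕ), a ∈ l →
    (l.erase a).insertIdx (l.idxOf a) a = l
  | [], h => by simp at h
  | b :: t, h => by
      by_cases hb : b = a
      · subst hb
        simp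
      · rw [List.idxOf_cons_ne _ hb, List.erase_cons_tail (by simpa using hb)]
        simp only [Nat.succ_eq_add_one, List.insertIdx_succ_cons]
        rw [myInsertIdx_indexOf_erase a t (by
          rcases List.mem_cons.mp h with h' | h'
          · exact absurd h'.symm hb
          · exact h')]

lemma myGetD_insertIdx_lt (a : ℕ) : ∀ (p j : ℕ) (l : List ℕ), j < p →
    (l.insertIdx p a).getD j 0 = l.getD j 0
  | 0, j, l, h => by omega
  | (p+1), j, [], h => by simp
  | (p+1), 0, b :: t, h => by simp
  | (p+1), (j+1), b :: t, h => by
      simp only [List.insertIdx_succ_cons, List.getD_cons_succ]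
      exact myGetD_insertIdx_lt a p j t (by omega)

lemma myGetD_insertIdx_self (a : ℕ) : ∀ (p : ℕ) (l : List ℕ), p ≤ l.length →
    (l.insertIdx p a).getD p 0 = a
  | 0, l, _ => by simp
  | (p+1), [], h => by simp at h
  | (p+1), b :: t, h => by
      simp only [List.insertIdx_succ_cons, List.getD_cons_succ]
      exact myGetD_insertIdx_self a p t (by simpa using h)

lemma myGetD_insertIdx_succ (a : ℕ) : ∀ (p j : ℕ) (l : List ℕ), p ≤ j → p ≤ l.length →
    (l.insertIdx p a).getD (j+1) 0 = l.getD j 0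
  | 0, j, l, _, _ => by simp
  | (p+1), 0, l, h, _ => by omega
  | (p+1), (j+1), [], _, h => by simp at h
  | (p+1), (j+1), b :: t, h, hl => by
      simp only [List.insertIdx_succ_cons, List.getD_cons_succ]
      exact myGetD_insertIdx_succ a p j t (by omega) (by simpa using hl)

lemma myGetD_lt_of_perm_range {l : List ℕ} {m : ℕ} (h : l.Perm (List.range m))
    (hm : 0 < m) (j : ℕ) : l.getD j 0 < m := by
  by_cases hj : j < l.length
  · have hmem : l.getD j 0 ∈ l := by
      rw [List.getD_eq_getElem l 0 hj]
      exact List.getElem_mem hj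
    simpa using List.mem_range.mp (h.subset hmem)
  · rw [List.getD_eq_default l 0 (by omega)]
    exact hm

lemma mem_founders {l : List ℕ} {i : ℕ} :
    i ∈ founders l ↔ i < l.length ∧
      ((∀ j < i, l.getD i 0 < l.getD j 0) ∨
       (∀ j < l.length, i < j → l.getD i 0 < l.getD j 0)) := by
  simp [founders]

lemma mem_perms {n : ℕ} {l : List ℕ} : l ∈ perms n ↔ l.Perm (List.range n) := by
  simp [perms, List.mem_permutations]

lemma range_succ_perm (n : ℕ) :
    (List.range (n+1)).Perm (n :: List.range n) := by
  rw [List.range_succ]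
  exact List.perm_append_singleton _ _

lemma founders_card_insertIdx (n p : ℕ) (l : List ℕ)
    (hl : l.Perm (List.range (n+1))) (hp : p ≤ n + 1) :
    (founders (l.insertIdx p (n+1))).card
      = (founders l).card + (if p = 0 ∨ p = n+1 then 1 else 0) := by
  set m := l.insertIdx p (n+1) with hm
  have hlen : l.length = n+1 := by simpa using hl.length_eq
  have hmlen : m.length = n+2 := by
    rw [hm, List.length_insertIdx_of_le_length (by omega : p ≤ l.length), hlen]
  have hbd : ∀ j, l.getD j 0 < n+1 := myGetD_lt_of_perm_range hl (by omega)
  have hval_lt : ∀ j, j < p → m.getD j 0 = l.getD j 0 :=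
    fun j hj => myGetD_insertIdx_lt _ _ _ _ hj
  have hval_p : m.getD p 0 = n+1 := myGetD_insertIdx_self _ _ _ (by omega)
  have hval_gt : ∀ j, p ≤ j → m.getD (j+1) 0 = l.getD j 0 :=
    fun j hj => myGetD_insertIdx_succ _ _ _ _ hj (by omega)
  have K1 : ∀ i, i ∈ founders l ↔ (if i < p then i else i + 1) ∈ founders m := by
    intro i
    rw [mem_founders, mem_founders, hlen, hmlen]
    by_cases hip : i < p
    · rw [if_pos hip]
      have hmi : m.getD i 0 = l.getD i 0 := hval_lt i hip
      constructor
      · rintro ⟨h1, h2 | h2⟩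
        · exact ⟨by omega, Or.inl fun j hj => by
            rw [hmi, hval_lt j (by omega)]; exact h2 j hj⟩
        · refine ⟨by omega, Or.inr fun j hj hij => ?_⟩
          rw [hmi]
          rcases lt_trichotomy j p with hjp | rfl | hjp
          · rw [hval_lt j hjp]; exact h2 j (by omega) hij
          · rw [hval_p]; exact hbd i
          · obtain ⟨j', rfl⟩ : ∃ j', j = j' + 1 := ⟨j - 1, by omega⟩
            rw [hval_gt j' (by omega)]
            exact h2 j' (by omega) (by omega)
      · rintro ⟨h1, h2 | h2⟩
        · refine ⟨by omega, Or.inl fun j hj => ?_⟩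
          have := h2 j hj; rwa [hmi, hval_lt j (by omega)] at this
        · refine ⟨by omega, Or.inr fun j hj hij => ?_⟩
          by_cases hjp : j < p
          · have := h2 j (by omega) hij; rwa [hmi, hval_lt j hjp] at this
          · have := h2 (j+1) (by omega) (by omega)
            rwa [hmi, hval_gt j (by omega)] at this
    · rw [if_neg hip]
      have hpi : p ≤ i := by omega
      have hmi : m.getD (i+1) 0 = l.getD i 0 := hval_gt i hpi
      constructor
      · rintro ⟨h1, h2 | h2⟩
        · refine ⟨by omega, Or.inl fun j hj => ?_⟩
          rw [hmi]
          rcases lt_trichotomy j p with hjp | rfl | hjp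
          · rw [hval_lt j hjp]; exact h2 j (by omega)
          · rw [hval_p]; exact hbd i
          · obtain ⟨j', rfl⟩ : ∃ j', j = j' + 1 := ⟨j - 1, by omega⟩
            rw [hval_gt j' (by omega)]; exact h2 j' (by omega)
        · refine ⟨by omega, Or.inr fun j hj hij => ?_⟩
          obtain ⟨j', rfl⟩ : ∃ j', j = j' + 1 := ⟨j - 1, by omega⟩
          rw [hmi, hval_gt j' (by omega)]
          exact h2 j' (by omega) (by omega)
      · rintro ⟨h1, h2 | h2⟩
        · refine ⟨by omega, Or.inl fun j hj => ?_⟩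
          by_cases hjp : j < p
          · have := h2 j (by omega); rwa [hmi, hval_lt j hjp] at this
          · have := h2 (j+1) (by omega); rwa [hmi, hval_gt j (by omega)] at this
        · refine ⟨by omega, Or.inr fun j hj hij => ?_⟩
          have := h2 (j+1) (by omega) (by omega)
          rwa [hmi, hval_gt j (by omega)] at this
  have K2 : p ∈ founders m ↔ (p = 0 ∨ p = n + 1) := by
    rw [mem_founders, hmlen]
    constructor
    · rintro ⟨h1, h2 | h2⟩
      · by_contra hc; push_neg at hc
        have := h2 0 (by omega)
        rw [hval_p, hval_lt 0 (by omega)] at this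
        exact absurd (hbd 0) (by omega)
      · by_contra hc; push_neg at hc
        have := h2 (p+1) (by omega) (by omega)
        rw [hval_p, hval_gt p le_rfl] at this
        exact absurd (hbd p) (by omega)
    · rintro (rfl | rfl)
      · exact ⟨by omega, Or.inl fun j hj => by omega⟩
      · refine ⟨by omega, Or.inr fun j hj hij => by omega⟩
  have hset : founders m = (founders l).image (fun i => if i < p then i else i+1)
      ∪ (if p = 0 ∨ p = n+1 then {p} else ∅) := by
    ext i
    simp only [Finset.mem_union, Finset.mem_image]
    constructor
    · intro hi
      by_cases hip : i = p
      · subst hip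
        right
        rw [if_pos (K2.mp hi)]
        exact Finset.mem_singleton_self _
      · left
        refine ⟨if i < p then i else i - 1, ?_, ?_⟩
        · rw [K1]
          have hi2 : i < n + 2 := hmlen ▸ (mem_founders.mp hi).1
          have heq : (if (if i < p then i else i - 1) < p then (if i < p then i else i - 1)
              else (if i < p then i else i - 1) + 1) = i := by
            split_ifs <;> omega
          rw [heq]; exact hi
        · split_ifs <;> omega
    · rintro (⟨a, ha, rfl⟩ | hcond)
      · exact (K1 a).mp ha
      · by_cases hc : p = 0 ∨ p = n+1
        · rw [if_pos hc] at hcond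
          rw [Finset.mem_singleton.mp hcond]
          exact K2.mpr hc
        · rw [if_neg hc] at hcond
          exact absurd hcond (Finset.notMem_empty i)
  have hinj : Function.Injective (fun i => if i < p then i else i + 1) := by
    intro a b hab
    simp only at hab
    split_ifs at hab <;> omega
  have hdisj : Disjoint ((founders l).image (fun i => if i < p then i else i+1))
      (if p = 0 ∨ p = n+1 then ({p} : Finset ℕ) else ∅) := by
    rw [Finset.disjoint_right]
    intro x hx hx'
    have hxp : x = p := by
      by_cases hc : p = 0 ∨ p = n+1
      · rw [if_pos hc] at hx; exact Finset.mem_singleton.mp hx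
      · rw [if_neg hc] at hx; exact absurd hx (Finset.notMem_empty x)
    obtain ⟨a, _, ha⟩ := Finset.mem_image.mp hx'
    subst hxp
    revert ha
    split_ifs <;> omega
  rw [hset, Finset.card_union_of_disjoint hdisj,
    Finset.card_image_of_injective _ hinj]
  congr 1
  split_ifs <;> simp

lemma not_mem_of_perm_range {n : ℕ} {l : List ℕ} (hl : l.Perm (List.range (n+1))) :
    (n+1) ∉ l := fun h => by simpa using List.mem_range.mp (hl.subset h)

lemma sum_perms_succ (n : ℕ) (f : List ℕ → ℝ) :
    ∑ l ∈ perms (n+2), f l =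
      ∑ p ∈ Finset.range (n+2), ∑ l ∈ perms (n+1), f (l.insertIdx p (n+1)) := by
  rw [← Finset.sum_product']
  refine Finset.sum_nbij' (i := fun l => ((l.idxOf (n+1), l.erase (n+1)) : ℕ × List ℕ))
    (j := fun q => q.2.insertIdx q.1 (n+1)) ?_ ?_ ?_ ?_ ?_
  · intro l hl
    have hl' : l.Perm ((n+1) :: List.range (n+1)) :=
      (mem_perms.mp hl).trans (range_succ_perm (n+1))
    have hmem : (n+1) ∈ l := hl'.mem_iff.mpr (List.mem_cons_self)
    have hlen : l.length = n+2 := by simpa using (mem_perms.mp hl).length_eq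
    refine Finset.mem_product.mpr ⟨Finset.mem_range.mpr ?_, mem_perms.mpr ?_⟩
    · rw [← hlen]; exact List.idxOf_lt_length_iff.mpr hmem
    · have := hl'.erase (n+1)
      rwa [List.erase_cons_head] at this
  · rintro ⟨p, l⟩ hq
    obtain ⟨hp, hl⟩ := Finset.mem_product.mp hq
    have hlp := mem_perms.mp hl
    have hlen : l.length = n+1 := by simpa using hlp.length_eq
    refine mem_perms.mpr ?_
    exact (List.perm_insertIdx (n+1) l (by rw [hlen]; exact Nat.lt_succ_iff.mp (Finset.mem_range.mp hp))).trans
      ((hlp.cons (n+1)).trans (range_succ_perm (n+1)).symm)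
  · intro l hl
    have hl' : l.Perm ((n+1) :: List.range (n+1)) :=
      (mem_perms.mp hl).trans (range_succ_perm (n+1))
    have hmem : (n+1) ∈ l := hl'.mem_iff.mpr (List.mem_cons_self)
    exact myInsertIdx_indexOf_erase (n+1) l hmem
  · rintro ⟨p, l⟩ hq
    obtain ⟨hp, hl⟩ := Finset.mem_product.mp hq
    have hlp := mem_perms.mp hl
    have hlen : l.length = n+1 := by simpa using hlp.length_eq
    have hnm : (n+1) ∉ l := not_mem_of_perm_range hlp
    have hple : p ≤ l.length := by
      rw [hlen]; exact Nat.lt_succ_iff.mp (Finset.mem_range.mp hp)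
    simp only [Prod.mk.injEq]
    exact ⟨myIndexOf_insertIdx (n+1) p l hnm hple, myErase_insertIdx (n+1) p l hnm hple⟩
  · intro l hl
    have hl' : l.Perm ((n+1) :: List.range (n+1)) :=
      (mem_perms.mp hl).trans (range_succ_perm (n+1))
    have hmem : (n+1) ∈ l := hl'.mem_iff.mpr (List.mem_cons_self)
    rw [myInsertIdx_indexOf_erase (n+1) l hmem]

lemma wiP_insertIdx (w : ℝ) (n p : ℕ) (l : List ℕ)
    (hl : l.Perm (List.range (n+1))) (hp : p ≤ n+1) :
    wiP w (n+2) (l.insertIdx p (n+1)) =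
      (if p = 0 ∨ p = n+1 then w else 1) / (2*w + n) * wiP w (n+1) l := by
  have hlen : l.length = n+1 := by simpa using hl.length_eq
  have hnm : (n+1) ∉ l := not_mem_of_perm_range hl
  have hple : p ≤ l.length := by omega
  rw [wiP, myIndexOf_insertIdx (n+1) p l hnm hple, myErase_insertIdx (n+1) p l hnm hple,
    List.length_insertIdx_of_le_length hple, hlen]
  norm_num


lemma sum_cond (n : ℕ) (x y : ℝ) :
    ∑ p ∈ Finset.range (n+2), (if p = 0 ∨ p = n+1 then x else y) = 2*x + n*y := by
  have h : ∀ p ∈ Finset.range (n+2),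
      (if p = 0 ∨ p = n+1 then x else y)
        = ((if p = 0 then x - y else 0) + (if p = n+1 then x - y else 0)) + y := by
    intro p _
    split_ifs <;> (first | omega | ring)
  rw [Finset.sum_congr rfl h, Finset.sum_add_distrib, Finset.sum_add_distrib,
    Finset.sum_ite_eq' (Finset.range (n+2)) 0 (fun _ => x - y),
    Finset.sum_ite_eq' (Finset.range (n+2)) (n+1) (fun _ => x - y),
    Finset.sum_const, Finset.card_range]
  rw [if_pos (Finset.mem_range.mpr (by omega)), if_pos (Finset.mem_range.mpr (by omega))]
  simp only [nsmul_eq_mul]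
  push_cast
  ring

lemma sum_wiP (w : ℝ) (hw : 0 < w) : ∀ n : ℕ, ∑ l ∈ perms (n+1), wiP w (n+1) l = 1 := by
  intro n
  induction n with
  | zero =>
    have h0 : ∀ l ∈ perms 1, wiP w 1 l = if l = [0] then (1:ℝ) else 0 := by
      intro l _; rfl
    rw [Finset.sum_congr rfl h0,
      Finset.sum_ite_eq' (perms 1) ([0] : List ℕ) (fun _ => (1:ℝ)),
      if_pos (mem_perms.mpr (by simp [List.range_succ]))]
  | succ m ih =>
    have hD : (2*w + (m:ℝ)) ≠ 0 := by positivity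
    rw [sum_perms_succ m (wiP w (m+2))]
    have h : ∀ p ∈ Finset.range (m+2),
        ∑ l ∈ perms (m+1), wiP w (m+2) (l.insertIdx p (m+1))
          = (if p = 0 ∨ p = m+1 then w else 1) / (2*w + m) := by
      intro p hp
      have hp' : p ≤ m + 1 := Nat.lt_succ_iff.mp (Finset.mem_range.mp hp)
      rw [Finset.sum_congr rfl (fun l hl =>
        wiP_insertIdx w m p l (mem_perms.mp hl) hp'), ← Finset.mul_sum, ih, mul_one]
    rw [Finset.sum_congr rfl h]
    have h2 : ∀ p ∈ Finset.range (m+2),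
        (if p = 0 ∨ p = m+1 then w else 1) / (2*w + m)
          = (if p = 0 ∨ p = m+1 then w / (2*w+m) else 1 / (2*w+m)) := by
      intro p _; split_ifs <;> ring
    rw [Finset.sum_congr rfl h2, sum_cond]
    field_simp

lemma sFound_succ_succ (w : ℝ) (hw : 0 < w) (n : ℕ) :
    sFound w (n+2) = sFound w (n+1) + 2*w/(2*w+n) := by
  have hD : (2*w + (n:ℝ)) ≠ 0 := by positivity
  have hS : sFound w (n+1) = ∑ l ∈ perms (n+1), ((founders l).card : ℝ) * wiP w (n+1) l := rfl
  rw [sFound, sum_perms_succ n (fun l => ((founders l).card : ℝ) * wiP w (n+2) l)]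
  have key : ∀ p ∈ Finset.range (n+2),
      (∑ l ∈ perms (n+1),
        ((founders (l.insertIdx p (n+1))).card : ℝ) * wiP w (n+2) (l.insertIdx p (n+1)))
      = (if p = 0 ∨ p = n+1 then w / (2*w+n) * sFound w (n+1) + w / (2*w+n)
         else 1 / (2*w+n) * sFound w (n+1)) := by
    intro p hp
    have hp' : p ≤ n + 1 := Nat.lt_succ_iff.mp (Finset.mem_range.mp hp)
    have hpt : ∀ l ∈ perms (n+1),
        ((founders (l.insertIdx p (n+1))).card : ℝ) * wiP w (n+2) (l.insertIdx p (n+1))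
        = (if p = 0 ∨ p = n+1 then w else 1)/(2*w+n) * (((founders l).card : ℝ) * wiP w (n+1) l)
          + ((if p = 0 ∨ p = n+1 then w else 1)/(2*w+n) * (if p = 0 ∨ p = n+1 then 1 else 0))
            * wiP w (n+1) l := by
      intro l hl
      have hlp := mem_perms.mp hl
      rw [wiP_insertIdx w n p l hlp hp', founders_card_insertIdx n p l hlp hp']
      split_ifs <;> push_cast <;> ring
    rw [Finset.sum_congr rfl hpt, Finset.sum_add_distrib, ← Finset.mul_sum, ← Finset.mul_sum,
      sum_wiP w hw n, ← hS]
    split_ifs <;> ring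
  rw [Finset.sum_congr rfl key, sum_cond]
  field_simp
  ring

end Helpers

/-- the expected number of founders `s_n` of the weighted-insertion
order with weight `w` on `[1,n]` satisfies `s_1 = 1`,
`s_{n+1} = s_n + 2w/(2w+n-1)`, and `s_n ≤ c₁ log n` for `n ≥ 2`,
for some constant `c₁` depending only on `w`. -/
theorem sFound_properties (w : ℝ) (hw : 0 < w) :
    sFound w 1 = 1 ∧
    (∀ n : ℕ, 1 ≤ n → sFound w (n + 1) = sFound w n + 2 * w / (2 * w + (n : ℝ) - 1)) ∧
    (∃ c₁ : ℝ, 0 < c₁ ∧ ∀ n : ℕ, 2 ≤ n → sFound w n ≤ c₁ * Real.log n) := by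
  have base : sFound w 1 = 1 := by
    have hfounders : founders [0] = {0} := by
      ext i
      simp only [founders, List.length_cons, List.length_nil, Finset.mem_filter,
        Finset.mem_range, Finset.mem_singleton]
      constructor
      · rintro ⟨h1, _⟩; omega
      · rintro rfl
        exact ⟨by omega, Or.inl fun j hj => by omega⟩
    have h0 : ∀ l ∈ perms 1, ((founders l).card : ℝ) * wiP w 1 l
        = if l = [0] then (1:ℝ) else 0 := by
      intro l _
      by_cases hl : l = [0]
      · subst hl
        rw [if_pos rfl, hfounders]
        show ((1:ℕ) : ℝ) * (if ([0]:List ℕ) = [0] then (1:ℝ) else 0) = 1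
        norm_num
      · rw [if_neg hl]
        show _ * (if l = [0] then (1:ℝ) else 0) = 0
        rw [if_neg hl, mul_zero]
    rw [sFound, Finset.sum_congr rfl h0,
      Finset.sum_ite_eq' (perms 1) ([0] : List ℕ) (fun _ => (1:ℝ)),
      if_pos (mem_perms.mpr (by simp [List.range_succ]))]
  have hrec : ∀ n : ℕ, 1 ≤ n → sFound w (n + 1) = sFound w n + 2 * w / (2 * w + (n:ℝ) - 1) := by
    intro n hn
    obtain ⟨m, rfl⟩ : ∃ m, n = m + 1 := ⟨n - 1, by omega⟩
    rw [sFound_succ_succ w hw m]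
    have : 2 * w + ((m:ℝ) + 1) - 1 = 2 * w + m := by ring
    push_cast
    rw [this]
  refine ⟨base, hrec, ?_⟩
  have hlog2 : 0 < Real.log 2 := Real.log_pos (by norm_num)
  refine ⟨2 * w + 2 + 2 / Real.log 2, by positivity, ?_⟩
  set c₁ := 2 * w + 2 + 2 / Real.log 2 with hc₁
  have hc2 : 2 * w + 2 ≤ c₁ := by
    rw [hc₁]
    have : 0 < 2 / Real.log 2 := by positivity
    linarith
  intro n hn
  induction n with
  | zero => omega
  | succ k ih =>
    by_cases hk : 2 ≤ k
    · have ihk := ih hk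
      have hk1 : (1:ℝ) ≤ (k:ℝ) := by exact_mod_cast Nat.one_le_iff_ne_zero.mpr (by omega)
      have hkpos : (0:ℝ) < (k:ℝ) := by linarith
      rw [hrec k (by omega)]
      have hlog : Real.log k + 1 / ((k:ℝ) + 1) ≤ Real.log ((k:ℝ) + 1) := by
        have hdivpos : (0:ℝ) < (k:ℝ) / ((k:ℝ) + 1) := by positivity
        have h1 : Real.log ((k:ℝ) / ((k:ℝ)+1)) ≤ (k:ℝ) / ((k:ℝ)+1) - 1 :=
          Real.log_le_sub_one_of_pos hdivpos
        rw [Real.log_div (by linarith) (by linarith)] at h1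
        have h2 : (k:ℝ) / ((k:ℝ)+1) - 1 = -(1 / ((k:ℝ)+1)) := by
          field_simp
          ring
        rw [h2] at h1
        linarith
      have hden : (0:ℝ) < 2 * w + (k:ℝ) - 1 := by linarith
      have hterm : 2 * w / (2 * w + (k:ℝ) - 1) ≤ c₁ * (1 / ((k:ℝ) + 1)) := by
        rw [div_le_iff₀ hden]
        have hexp : c₁ * (1 / ((k:ℝ) + 1)) * (2 * w + (k:ℝ) - 1)
            = c₁ * ((2 * w + (k:ℝ) - 1) / ((k:ℝ) + 1)) := by ring
        rw [hexp]
        have h3 : (2 * w + 2) * (2 * w + (k:ℝ) - 1) ≥ 2 * w * ((k:ℝ) + 1) := by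
          nlinarith
        have h4 : 2 * w + (k:ℝ) - 1 > 0 := hden
        rw [← sub_nonneg]
        have h5 : c₁ * ((2 * w + (k:ℝ) - 1) / ((k:ℝ) + 1)) - 2 * w
            = (c₁ * (2 * w + (k:ℝ) - 1) - 2 * w * ((k:ℝ) + 1)) / ((k:ℝ) + 1) := by
          field_simp
        rw [h5]
        apply div_nonneg _ (by linarith)
        have h6 : (2 * w + 2) * (2 * w + (k:ℝ) - 1) ≤ c₁ * (2 * w + (k:ℝ) - 1) := by
          apply mul_le_mul_of_nonneg_right hc2 (le_of_lt hden)
        linarith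
      have hcast : ((k + 1 : ℕ) : ℝ) = (k:ℝ) + 1 := by push_cast; ring
      rw [hcast]
      calc sFound w k + 2 * w / (2 * w + (k:ℝ) - 1)
          ≤ c₁ * Real.log k + c₁ * (1 / ((k:ℝ) + 1)) := add_le_add ihk hterm
        _ = c₁ * (Real.log k + 1 / ((k:ℝ) + 1)) := by ring
        _ ≤ c₁ * Real.log ((k:ℝ) + 1) := by
            apply mul_le_mul_of_nonneg_left hlog
            positivity
    · have hk1 : k = 1 := by omega
      subst hk1
      rw [hrec 1 le_rfl, base]
      have h2w : 2 * w + ((1:ℕ):ℝ) - 1 = 2 * w := by push_cast; ring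
      rw [h2w, div_self (by positivity : 2 * w ≠ 0)]
      have hcast : ((1 + 1 : ℕ) : ℝ) = 2 := by norm_num
      rw [hcast]
      have : c₁ * Real.log 2 = (2 * w + 2) * Real.log 2 + 2 := by
        rw [hc₁]
        field_simp
      rw [this]
      nlinarith [mul_pos (by linarith : (0:ℝ) < 2 * w + 2) hlog2]
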